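/- Let n ≥ 2, let U₀, U₁, …, U_{n−1} be independent standard normal random variables, let λ₁, …, λ_{n−1} ≥ 0, let B₁, …, B_{n−1} ≥ 0, α ∈ (0,1), z = Φ⁻¹(1 − α/2), and Δ = √( (1 − Σ_{k=1}^{n−1} λ_k·k/(k+1))² + Σ_{j=1}^{n−1} ( Σ_{k=j}^{n−1} λ_k/(k+1) )² ). Set V_j = U₀ − U_j for j = 1, …, n−1. Then with probability at least 1 − α, U₀ lies in the interval [ Σ_{k=1}^{n−1} (λ_k/(k+1)) Σ_{j=1}^{k} (V_j − B_j) − z·Δ , Σ_{k=1}^{n−1} (λ_k/(k+1)) Σ_{j=1}^{k} (V_j + B_j) + z·Δ ]; that is, the conservative n-point plausibility region covers U₀ with probability at least 1 − α. -/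

import Mathlib

open MeasureTheory ProbabilityTheory

open scoped Real NNReal ENNReal

lemma pdf_prod_eq (a b : ℝ≥0) (ha : a ≠ 0) (hb : b ≠ 0) (u x : ℝ) :
    gaussianPDFReal 0 a x * gaussianPDFReal 0 b (u - x)
      = ((√(2 * π * a))⁻¹ * (√(2 * π * b))⁻¹ * rexp (- u ^ 2 / (2 * ((a:ℝ) + b))))
        * rexp (-(((a:ℝ) + b) / (2 * a * b)) * (x - (a:ℝ) * u / ((a:ℝ)+b)) ^ 2) := by
  have ha' : (0:ℝ) < a := lt_of_le_of_ne a.coe_nonneg (by exact_mod_cast (Ne.symm ha))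
  have hb' : (0:ℝ) < b := lt_of_le_of_ne b.coe_nonneg (by exact_mod_cast (Ne.symm hb))
  have hab : (0:ℝ) < (a:ℝ) + b := by linarith
  simp only [gaussianPDFReal, sub_zero]
  rw [show ((√(2 * π * a))⁻¹ * rexp (- x ^ 2 / (2 * a))) * ((√(2 * π * b))⁻¹ * rexp (- (u - x) ^ 2 / (2 * b)))
      = (√(2 * π * a))⁻¹ * (√(2 * π * b))⁻¹ * (rexp (- x ^ 2 / (2 * a)) * rexp (- (u - x) ^ 2 / (2 * b))) by ring,
    ← Real.exp_add]
  have hexp : - x ^ 2 / (2 * (a:ℝ)) + - (u - x) ^ 2 / (2 * (b:ℝ))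
      = - u ^ 2 / (2 * ((a:ℝ) + b)) + (-(((a:ℝ) + b) / (2 * a * b)) * (x - (a:ℝ) * u / ((a:ℝ)+b)) ^ 2) := by
    field_simp
    ring
  rw [hexp, Real.exp_add]
  ring

lemma lintegral_gaussianPDF_conv (a b : ℝ≥0) (ha : a ≠ 0) (hb : b ≠ 0) (u : ℝ) :
    ∫⁻ x, gaussianPDF 0 a x * gaussianPDF 0 b (u - x) = gaussianPDF 0 (a + b) u := by
  have ha' : (0:ℝ) < a := lt_of_le_of_ne a.coe_nonneg (by exact_mod_cast (Ne.symm ha))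
  have hb' : (0:ℝ) < b := lt_of_le_of_ne b.coe_nonneg (by exact_mod_cast (Ne.symm hb))
  have hab : (0:ℝ) < (a:ℝ) + b := by linarith
  have hpi := Real.pi_pos
  set c : ℝ := ((a:ℝ) + b) / (2 * a * b) with hc
  have hc' : 0 < c := by positivity
  set m : ℝ := (a:ℝ) * u / ((a:ℝ) + b) with hm
  set K : ℝ := (√(2 * π * a))⁻¹ * (√(2 * π * b))⁻¹ * rexp (- u ^ 2 / (2 * ((a:ℝ) + b))) with hK
  have hK0 : 0 ≤ K := by positivity
  have h1 : ∀ x, gaussianPDF 0 a x * gaussianPDF 0 b (u - x)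
      = ENNReal.ofReal (K * rexp (-c * (x - m) ^ 2)) := by
    intro x
    rw [gaussianPDF, gaussianPDF, ← ENNReal.ofReal_mul (gaussianPDFReal_nonneg _ _ _),
      pdf_prod_eq a b ha hb u x]
  simp_rw [h1]
  have hint : Integrable (fun x => K * rexp (-c * (x - m) ^ 2)) := by
    exact ((integrable_exp_neg_mul_sq hc').comp_sub_right m).const_mul K
  rw [← ofReal_integral_eq_lintegral_ofReal hint (ae_of_all _ fun x => by positivity)]
  rw [MeasureTheory.integral_const_mul]
  rw [integral_sub_right_eq_self (fun x => rexp (-c * x ^ 2)) m, integral_gaussian]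
  rw [gaussianPDF]
  congr 1
  rw [gaussianPDFReal]
  have hconst : (√(2 * π * a))⁻¹ * (√(2 * π * b))⁻¹ * √(π / c) = (√(2 * π * ((a:ℝ) + b)))⁻¹ := by
    rw [← Real.sqrt_inv, ← Real.sqrt_inv, ← Real.sqrt_inv,
      ← Real.sqrt_mul (by positivity), ← Real.sqrt_mul (by positivity)]
    congr 1
    rw [hc]
    field_simp
  push_cast
  rw [← hconst]
  rw [hK]
  ring_nf

lemma gaussianReal_conv (a b : ℝ≥0) (ha : a ≠ 0) (hb : b ≠ 0) :
    Measure.conv (gaussianReal 0 a) (gaussianReal 0 b) = gaussianReal 0 (a + b) := by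
  have hab : a + b ≠ 0 := by
    intro h
    exact ha (by simpa using (add_eq_zero.mp h).1)
  rw [gaussianReal_of_var_ne_zero _ ha, gaussianReal_of_var_ne_zero _ hb,
    gaussianReal_of_var_ne_zero _ hab]
  refine Measure.ext fun s hs => ?_
  set pa := gaussianPDF 0 a with hpa
  set pb := gaussianPDF 0 b with hpb
  set g : ℝ → ℝ≥0∞ := s.indicator 1 with hg
  have hgm : Measurable g := measurable_const.indicator hs
  have hpam : Measurable pa := measurable_gaussianPDF _ _
  have hpbm : Measurable pb := measurable_gaussianPDF _ _
  have htm : MeasurableSet ((fun p : ℝ × ℝ => p.1 + p.2) ⁻¹' s) := measurable_add hs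
  rw [Measure.conv, Measure.map_apply measurable_add hs,
    Measure.prod_apply htm]
  have hinner : ∀ x : ℝ, (volume.withDensity pb) (Prod.mk x ⁻¹' ((fun p : ℝ × ℝ => p.1 + p.2) ⁻¹' s))
      = ∫⁻ y, g (x + y) * pb y := by
    intro x
    have hsx : MeasurableSet (Prod.mk x ⁻¹' ((fun p : ℝ × ℝ => p.1 + p.2) ⁻¹' s)) :=
      measurable_prodMk_left htm
    rw [withDensity_apply _ hsx, ← lintegral_indicator hsx _]
    congr 1
    ext y
    by_cases hy : x + y ∈ s <;>
      simp [Set.indicator, hy, hg, Set.mem_preimage]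
  rw [lintegral_withDensity_eq_lintegral_mul _ hpam
    (measurable_measure_prodMk_left htm)]
  simp only [Pi.mul_apply, hinner]
  have hstep : ∀ x : ℝ, pa x * ∫⁻ y, g (x + y) * pb y
      = ∫⁻ u, pa x * g u * pb (u - x) := by
    intro x
    rw [← lintegral_const_mul _ (by exact (hgm.comp (measurable_const_add x)).mul hpbm)]
    have : ∀ y, pa x * (g (x + y) * pb y) = (fun u => pa x * g u * pb (u - x)) (x + y) := by
      intro y
      simp [add_sub_cancel_left, mul_assoc]
    simp_rw [this]
    exact lintegral_add_left_eq_self (fun u => pa x * g u * pb (u - x)) x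
  simp_rw [hstep]
  rw [lintegral_lintegral_swap]
  · have : ∀ u : ℝ, ∫⁻ x, pa x * g u * pb (u - x) = g u * gaussianPDF 0 (a + b) u := by
      intro u
      rw [← lintegral_gaussianPDF_conv a b ha hb u, ← lintegral_const_mul _ (by exact hpam.mul (hpbm.comp (measurable_const_sub u)))]
      congr 1
      ext x
      ring
    simp_rw [this]
    rw [withDensity_apply _ hs, ← lintegral_indicator hs _]
    congr 1
    ext u
    by_cases hu : u ∈ s <;> simp [Set.indicator, hu, hg]
  · apply Measurable.aemeasurable
    exact ((hpam.comp measurable_fst).mul (hgm.comp measurable_snd)).mul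
      (hpbm.comp (measurable_snd.sub measurable_fst))

lemma map_sum_gaussian {Ω : Type*} [MeasurableSpace Ω] (P : Measure Ω) [IsProbabilityMeasure P]
    {ι : Type*} (Y : ι → Ω → ℝ) (hmeas : ∀ i, Measurable (Y i))
    (hind : iIndepFun Y P)
    (v : ι → ℝ≥0) (hY : ∀ i, P.map (Y i) = gaussianReal 0 (v i)) (s : Finset ι) :
    P.map (fun ω => ∑ i ∈ s, Y i ω) = gaussianReal 0 (∑ i ∈ s, v i) := by
  classical
  induction s using Finset.induction_on with
  | empty =>
      simp only [Finset.sum_empty]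
      rw [Measure.map_const, gaussianReal_zero_var]
      simp
  | @insert i s hi ih =>
      have hsum_meas : Measurable (fun ω => ∑ j ∈ s, Y j ω) := by
        exact Finset.measurable_sum s fun j _ => hmeas j
      have hindep : IndepFun (Y i) (fun ω => ∑ j ∈ s, Y j ω) P := by
        have := (hind.indepFun_finsetSum_of_notMem hmeas hi).symm
        convert this using 1
        ext ω
        simp [Finset.sum_apply]
      have hconv : P.map (fun ω => Y i ω + ∑ j ∈ s, Y j ω)
          = Measure.conv (P.map (Y i)) (P.map (fun ω => ∑ j ∈ s, Y j ω)) := by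
        rw [Measure.conv,
          ← (indepFun_iff_map_prod_eq_prod_map_map (hmeas i).aemeasurable
              hsum_meas.aemeasurable).mp hindep,
          Measure.map_map measurable_add ((hmeas i).prodMk hsum_meas)]
        rfl
      simp only [Finset.sum_insert hi]
      rw [hconv, hY i, ih]
      by_cases hvi : v i = 0
      · by_cases hvs : ∑ j ∈ s, v j = 0
        · simp [hvi, hvs, gaussianReal_zero_var]
        · rw [hvi, gaussianReal_zero_var]
          simp only [zero_add]
          exact MeasureTheory.Measure.dirac_zero_conv _
      · by_cases hvs : ∑ j ∈ s, v j = 0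
        · rw [hvs, gaussianReal_zero_var, add_zero]
          exact MeasureTheory.Measure.conv_dirac_zero _
        · exact gaussianReal_conv _ _ hvi hvs

lemma gauss_symm_map : (gaussianReal 0 1).map (fun x : ℝ => -x) = gaussianReal 0 1 := by
  have h : (fun x : ℝ => -x) = (fun x : ℝ => (-1 : ℝ) * x) := by
    funext x; ring
  rw [h, gaussianReal_map_const_mul]
  congr 1
  · norm_num
  · ext
    norm_num

lemma gauss_Icc_prob {α z : ℝ} (hα : α ∈ Set.Ioo (0:ℝ) 1)
    (hz : cdf (gaussianReal 0 1) z = 1 - α / 2) :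
    0 < z ∧ (gaussianReal 0 1) (Set.Icc (-z) z) = ENNReal.ofReal (1 - α) := by
  set μ := gaussianReal 0 1 with hμ
  haveI : IsProbabilityMeasure μ := by rw [hμ]; infer_instance
  have hat : ∀ c : ℝ, μ {c} = 0 := fun c =>
    gaussianReal_absolutelyContinuous 0 one_ne_zero (by simp)
  have hmap : μ.map (fun x : ℝ => -x) = μ := by rw [hμ]; exact gauss_symm_map
  have hneg : ∀ t : ℝ, μ (Set.Iic (-t)) = μ (Set.Ici t) := by
    intro t
    conv_lhs => rw [← hmap]
    rw [Measure.map_apply measurable_neg measurableSet_Iic]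
    congr 1
    ext x
    simp
  have hIio : ∀ t : ℝ, μ (Set.Iio t) = μ (Set.Iic t) := by
    intro t
    refine le_antisymm (measure_mono Set.Iio_subset_Iic_self) ?_
    calc μ (Set.Iic t) = μ (Set.Iio t ∪ {t}) := by rw [Set.Iio_union_right]
    _ ≤ μ (Set.Iio t) + μ {t} := measure_union_le _ _
    _ = μ (Set.Iio t) := by rw [hat, add_zero]
  have hcdf : ∀ t : ℝ, μ (Set.Iic t) = ENNReal.ofReal (cdf μ t) := by
    intro t
    rw [cdf_eq_real, measureReal_def, ENNReal.ofReal_toReal (measure_ne_top _ _)]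
  -- cdf at 0 is 1/2
  have h0 : cdf μ 0 = 1/2 := by
    have hIic0 : μ (Set.Iic (0:ℝ)) + μ (Set.Iic (0:ℝ)) = 1 := by
      have hcompl : μ (Set.Iic (0:ℝ)) + μ (Set.Ioi (0:ℝ)) = 1 := by
        rw [← Set.compl_Iic]
        rw [measure_add_measure_compl measurableSet_Iic]
        exact measure_univ
      have hOgt : μ (Set.Ioi (0:ℝ)) = μ (Set.Iic (0:ℝ)) := by
        have : μ (Set.Ioi (0:ℝ)) = μ (Set.Iio (0:ℝ)) := by
          conv_rhs => rw [← hmap]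
          rw [Measure.map_apply measurable_neg measurableSet_Iio]
          congr 1
          ext x
          simp
        rw [this, hIio]
      rwa [hOgt] at hcompl
    have := congrArg ENNReal.toReal hIic0
    rw [ENNReal.toReal_add (measure_ne_top _ _) (measure_ne_top _ _)] at this
    simp only [ENNReal.toReal_one] at this
    have hc := cdf_eq_real (μ := μ) (0:ℝ)
    rw [hc, measureReal_def]
    linarith
  have hzpos : 0 < z := by
    by_contra hle
    push_neg at hle
    have : cdf μ z ≤ cdf μ 0 := (cdf μ).mono hle
    rw [hz, h0] at this
    have := hα.2
    linarith
  refine ⟨hzpos, ?_⟩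
  have hIicz : μ (Set.Iic z) = ENNReal.ofReal (1 - α/2) := by rw [hcdf, hz]
  have half_nonneg : (0:ℝ) ≤ 1 - α/2 := by have := hα.2; linarith
  have hIionegz : μ (Set.Iio (-z)) = ENNReal.ofReal (α/2) := by
    rw [hIio, hneg]
    have hIci : μ (Set.Ici z) = 1 - μ (Set.Iic z) := by
      rw [← Set.compl_Iio, measure_compl measurableSet_Iio (measure_ne_top _ _),
        measure_univ, hIio, hIicz]
    rw [hIci, hIicz, ← ENNReal.ofReal_one, ← ENNReal.ofReal_sub _ half_nonneg]
    congr 1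
    ring
  rw [← (show Set.Iic z \ Set.Iio (-z) = Set.Icc (-z) z by
      ext x; simp only [Set.mem_diff, Set.mem_Iic, Set.mem_Iio, Set.mem_Icc, not_lt]; tauto),
    measure_diff (Set.Iio_subset_Iic_self.trans (Set.Iic_subset_Iic.mpr (by linarith)))
      measurableSet_Iio.nullMeasurableSet (measure_ne_top _ _),
    hIicz, hIionegz, ← ENNReal.ofReal_sub _ (by linarith [hα.1] : (0:ℝ) ≤ α/2)]
  congr 1
  ring

lemma prob_abs_le {Ω : Type*} [MeasurableSpace Ω] (P : Measure Ω) [IsProbabilityMeasure P]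
    (X : Ω → ℝ) (hXm : Measurable X) (v : ℝ≥0) (hX : P.map X = gaussianReal 0 v)
    {α z : ℝ} (hα : α ∈ Set.Ioo (0:ℝ) 1) (hz : cdf (gaussianReal 0 1) z = 1 - α / 2) :
    ENNReal.ofReal (1 - α)
      ≤ P {ω | X ω ∈ Set.Icc (-(z * Real.sqrt v)) (z * Real.sqrt v)} := by
  obtain ⟨hzpos, hIcc⟩ := gauss_Icc_prob hα hz
  have hset : {ω | X ω ∈ Set.Icc (-(z * Real.sqrt v)) (z * Real.sqrt v)}
      = X ⁻¹' Set.Icc (-(z * Real.sqrt v)) (z * Real.sqrt v) := rfl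
  by_cases hv : v = 0
  · subst hv
    have : P (X ⁻¹' Set.Icc (-(z * Real.sqrt ((0:ℝ≥0):ℝ))) (z * Real.sqrt ((0:ℝ≥0):ℝ))) = 1 := by
      rw [← Measure.map_apply hXm measurableSet_Icc, hX, gaussianReal_zero_var]
      simp [Measure.dirac_apply' _ measurableSet_Icc]
    rw [hset, this]
    exact ENNReal.ofReal_le_one.mpr (by linarith [hα.1])
  · have hv' : (0:ℝ) < v := lt_of_le_of_ne v.coe_nonneg (by exact_mod_cast (Ne.symm hv))
    set Δ : ℝ := Real.sqrt v with hΔdef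
    have hΔ : 0 < Δ := Real.sqrt_pos.mpr hv'
    have hΔsq : Δ ^ 2 = (v:ℝ) := Real.sq_sqrt hv'.le
    have hmapW : P.map (fun ω => Δ⁻¹ * X ω) = gaussianReal 0 1 := by
      have hcomp : (fun ω => Δ⁻¹ * X ω) = (fun x : ℝ => Δ⁻¹ * x) ∘ X := rfl
      rw [hcomp, ← Measure.map_map (measurable_const_mul _) hXm, hX,
        gaussianReal_map_const_mul]
      norm_num
      congr 1
      ext
      push_cast
      field_simp
      exact hΔsq.symm
    have hsets : X ⁻¹' Set.Icc (-(z * Δ)) (z * Δ)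
        = (fun ω => Δ⁻¹ * X ω) ⁻¹' Set.Icc (-z) z := by
      ext ω
      simp only [Set.mem_preimage, Set.mem_Icc, inv_mul_eq_div, le_div_iff₀ hΔ, div_le_iff₀ hΔ,
        neg_mul]
    rw [hset, hsets, ← Measure.map_apply (hXm.const_mul _) measurableSet_Icc, hmapW, hIcc]

/-- For `n ≥ 2`, independent standard normal `U₀, …, U_{n−1}`,
`λ₁, …, λ_{n−1} ≥ 0`, `B₁, …, B_{n−1} ≥ 0`, `α ∈ (0,1)`, `z = Φ⁻¹(1 − α/2)` and `Δ` the
standard deviation of the partial regression residual, with `V_j = U₀ − U_j`, the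
conservative n-point plausibility interval
`[Σ_k (λ_k/(k+1)) Σ_{j≤k} (V_j − B_j) − zΔ, Σ_k (λ_k/(k+1)) Σ_{j≤k} (V_j + B_j) + zΔ]`
covers `U₀` with probability at least `1 − α`. -/
theorem stmt18 {Ω : Type*} [MeasurableSpace Ω] (P : Measure Ω) [IsProbabilityMeasure P]
    (n : ℕ) (hn : 2 ≤ n) (U : ℕ → Ω → ℝ) (hm : ∀ i, i < n → Measurable (U i))
    (hind : iIndepFun (fun i : Fin n => U i) P)
    (hlaw : ∀ i, i < n → Measure.map (U i) P = gaussianReal 0 1)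
    (lam : ℕ → ℝ) (hlam : ∀ k, 0 ≤ lam k) (B : ℕ → ℝ) (hB : ∀ j, 0 ≤ B j)
    (α : ℝ) (hα : α ∈ Set.Ioo (0 : ℝ) 1)
    (z : ℝ) (hz : cdf (gaussianReal 0 1) z = 1 - α / 2) :
    ENNReal.ofReal (1 - α) ≤
      P {ω | U 0 ω ∈ Set.Icc
          (∑ k ∈ Finset.Icc 1 (n - 1), lam k / ((k : ℝ) + 1) *
              ∑ j ∈ Finset.Icc 1 k, ((U 0 ω - U j ω) - B j) -
            z * Real.sqrt
              ((1 - ∑ k ∈ Finset.Icc 1 (n - 1), lam k * (k : ℝ) / ((k : ℝ) + 1)) ^ 2 +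
                ∑ j ∈ Finset.Icc 1 (n - 1),
                  (∑ k ∈ Finset.Icc j (n - 1), lam k / ((k : ℝ) + 1)) ^ 2))
          (∑ k ∈ Finset.Icc 1 (n - 1), lam k / ((k : ℝ) + 1) *
              ∑ j ∈ Finset.Icc 1 k, ((U 0 ω - U j ω) + B j) +
            z * Real.sqrt
              ((1 - ∑ k ∈ Finset.Icc 1 (n - 1), lam k * (k : ℝ) / ((k : ℝ) + 1)) ^ 2 +
                ∑ j ∈ Finset.Icc 1 (n - 1),
                  (∑ k ∈ Finset.Icc j (n - 1), lam k / ((k : ℝ) + 1)) ^ 2))} := by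
  classical
  -- coefficients
  set c0 : ℝ := 1 - ∑ k ∈ Finset.Icc 1 (n - 1), lam k * (k : ℝ) / ((k : ℝ) + 1) with hc0
  set c : ℕ → ℝ := fun j => ∑ k ∈ Finset.Icc j (n - 1), lam k / ((k : ℝ) + 1) with hc
  set a : ℕ → ℝ := fun i => if i = 0 then c0 else c i with ha
  set Δ2 : ℝ := c0 ^ 2 + ∑ j ∈ Finset.Icc 1 (n - 1), (c j) ^ 2 with hΔ2
  have hrange : Finset.range n = insert 0 (Finset.Icc 1 (n - 1)) := by
    ext i
    simp [Finset.mem_range, Finset.mem_Icc, Finset.mem_insert]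
    omega
  have h0notmem : (0:ℕ) ∉ Finset.Icc 1 (n - 1) := by simp
  -- the residual as a sum over range n
  set X : Ω → ℝ := fun ω => ∑ i ∈ Finset.range n, a i * U i ω with hX
  have hXm : Measurable X := Finset.measurable_sum _ fun i hi =>
    ((hm i (Finset.mem_range.mp hi)).const_mul _)
  -- distribution of X
  set v : ℝ≥0 := ∑ i ∈ Finset.range n, ⟨(a i) ^ 2, sq_nonneg _⟩ with hv
  have hXdist : P.map X = gaussianReal 0 v := by
    have hYm : ∀ i : Fin n, Measurable (fun ω => a i * U i ω) :=
      fun i => (hm i i.2).const_mul _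
    have hindY : iIndepFun
        (fun (i : Fin n) (ω : Ω) => a (i:ℕ) * U i ω) P := by
      exact hind.comp (fun i x => a (i:ℕ) * x) (fun i => measurable_const_mul _)
    have hYlaw : ∀ i : Fin n, P.map (fun ω => a (i:ℕ) * U i ω)
        = gaussianReal 0 (⟨(a (i:ℕ)) ^ 2, sq_nonneg _⟩) := by
      intro i
      have : (fun ω => a (i:ℕ) * U i ω) = (fun x : ℝ => a (i:ℕ) * x) ∘ U i := rfl
      rw [this, ← Measure.map_map (measurable_const_mul _) (hm i i.2), hlaw i i.2,
        gaussianReal_map_const_mul]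
      norm_num
      rfl
    have := map_sum_gaussian P (fun (i : Fin n) (ω : Ω) => a (i:ℕ) * U i ω) hYm hindY
      (fun i : Fin n => ⟨(a (i:ℕ)) ^ 2, sq_nonneg _⟩) hYlaw Finset.univ
    have hXeq : X = fun ω => ∑ i : Fin n, a (i:ℕ) * U i ω := by
      funext ω
      rw [hX]
      exact (Fin.sum_univ_eq_sum_range (fun i => a i * U i ω) n).symm
    rw [hXeq]
    rw [this]
    congr 1
    rw [hv]
    exact Fin.sum_univ_eq_sum_range (fun i => (⟨(a i) ^ 2, sq_nonneg _⟩ : ℝ≥0)) n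
  -- variance identity
  have hvΔ : (v : ℝ) = Δ2 := by
    rw [hv, hΔ2]
    have hcs : NNReal.toReal (∑ i ∈ Finset.range n, (⟨(a i) ^ 2, sq_nonneg _⟩ : ℝ≥0))
        = ∑ i ∈ Finset.range n, a i ^ 2 := NNReal.coe_sum ..
    refine hcs.trans ?_
    rw [hrange, Finset.sum_insert h0notmem]
    have h0 : a 0 = c0 := by simp [ha]
    have hj : ∀ j ∈ Finset.Icc 1 (n-1), a j ^ 2 = c j ^ 2 := by
      intro j hj
      have hj0 : j ≠ 0 := by
        rcases Finset.mem_Icc.mp hj with ⟨h1, _⟩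
        omega
      simp [ha, hj0]
    rw [h0, Finset.sum_congr rfl hj]
  -- algebraic identity: X ω = U 0 ω - S ω
  have hRS : ∀ ω, X ω = U 0 ω -
      ∑ k ∈ Finset.Icc 1 (n - 1), lam k / ((k : ℝ) + 1) *
        ∑ j ∈ Finset.Icc 1 k, (U 0 ω - U j ω) := by
    intro ω
    show (∑ i ∈ Finset.range n, a i * U i ω) = _
    rw [hrange, Finset.sum_insert h0notmem]
    have h0 : a 0 = c0 := by simp [ha]
    have hrest : ∑ j ∈ Finset.Icc 1 (n - 1), a j * U j ω
        = ∑ j ∈ Finset.Icc 1 (n - 1), c j * U j ω := by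
      refine Finset.sum_congr rfl fun j hj => ?_
      have hj0 : j ≠ 0 := by
        rcases Finset.mem_Icc.mp hj with ⟨h1, _⟩
        omega
      simp [ha, hj0]
    have hswap : ∑ j ∈ Finset.Icc 1 (n - 1), c j * U j ω
        = ∑ k ∈ Finset.Icc 1 (n - 1), lam k / ((k : ℝ) + 1) * ∑ j ∈ Finset.Icc 1 k, U j ω := by
      have h1 : ∀ j ∈ Finset.Icc 1 (n-1), c j * U j ω
          = ∑ k ∈ Finset.Icc j (n - 1), lam k / ((k : ℝ) + 1) * U j ω := by
        intro j _
        rw [hc]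
        rw [Finset.sum_mul]
      rw [Finset.sum_congr rfl h1]
      rw [Finset.sum_comm' (s := Finset.Icc 1 (n-1)) (t := fun j => Finset.Icc j (n-1))
        (t' := Finset.Icc 1 (n-1)) (s' := fun k => Finset.Icc 1 k) (by
        intro x y
        simp only [Finset.mem_Icc]
        omega)]
      refine Finset.sum_congr rfl fun k _ => ?_
      rw [Finset.mul_sum]
    have hinner : ∀ k ∈ Finset.Icc 1 (n-1),
        lam k / ((k : ℝ) + 1) * ∑ j ∈ Finset.Icc 1 k, (U 0 ω - U j ω)
        = lam k * (k : ℝ) / ((k : ℝ) + 1) * U 0 ω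
          - lam k / ((k : ℝ) + 1) * ∑ j ∈ Finset.Icc 1 k, U j ω := by
      intro k _
      rw [Finset.sum_sub_distrib, Finset.sum_const, Nat.card_Icc]
      simp only [nsmul_eq_mul, Nat.add_sub_cancel]
      ring
    rw [Finset.sum_congr rfl hinner, Finset.sum_sub_distrib, hrest, ← Finset.sum_mul, h0, hc0]
    rw [hswap]
    ring
  -- positivity of the buffer term
  have hT : 0 ≤ ∑ k ∈ Finset.Icc 1 (n - 1), lam k / ((k : ℝ) + 1) * ∑ j ∈ Finset.Icc 1 k, B j := by
    refine Finset.sum_nonneg fun k _ => ?_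
    have : (0:ℝ) ≤ lam k / ((k : ℝ) + 1) := div_nonneg (hlam k) (by positivity)
    exact mul_nonneg this (Finset.sum_nonneg fun j _ => hB j)
  -- the sqrt in the statement is √v
  have hsqrt : Real.sqrt ((1 - ∑ k ∈ Finset.Icc 1 (n - 1), lam k * (k : ℝ) / ((k : ℝ) + 1)) ^ 2 +
      ∑ j ∈ Finset.Icc 1 (n - 1),
        (∑ k ∈ Finset.Icc j (n - 1), lam k / ((k : ℝ) + 1)) ^ 2) = Real.sqrt (v : ℝ) := by
    rw [hvΔ, hΔ2, hc0, hc]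
  -- inclusion of events
  have hsub : {ω | X ω ∈ Set.Icc (-(z * Real.sqrt (v:ℝ))) (z * Real.sqrt (v:ℝ))} ⊆
      {ω | U 0 ω ∈ Set.Icc
          (∑ k ∈ Finset.Icc 1 (n - 1), lam k / ((k : ℝ) + 1) *
              ∑ j ∈ Finset.Icc 1 k, ((U 0 ω - U j ω) - B j) -
            z * Real.sqrt
              ((1 - ∑ k ∈ Finset.Icc 1 (n - 1), lam k * (k : ℝ) / ((k : ℝ) + 1)) ^ 2 +
                ∑ j ∈ Finset.Icc 1 (n - 1),
                  (∑ k ∈ Finset.Icc j (n - 1), lam k / ((k : ℝ) + 1)) ^ 2))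
          (∑ k ∈ Finset.Icc 1 (n - 1), lam k / ((k : ℝ) + 1) *
              ∑ j ∈ Finset.Icc 1 k, ((U 0 ω - U j ω) + B j) +
            z * Real.sqrt
              ((1 - ∑ k ∈ Finset.Icc 1 (n - 1), lam k * (k : ℝ) / ((k : ℝ) + 1)) ^ 2 +
                ∑ j ∈ Finset.Icc 1 (n - 1),
                  (∑ k ∈ Finset.Icc j (n - 1), lam k / ((k : ℝ) + 1)) ^ 2))} := by
    intro ω hω
    simp only [Set.mem_setOf_eq, Set.mem_Icc] at hω ⊢
    obtain ⟨hlo, hhi⟩ := hω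
    rw [hRS ω] at hlo hhi
    rw [hsqrt]
    have hsplit1 : ∑ k ∈ Finset.Icc 1 (n - 1), lam k / ((k : ℝ) + 1) *
        ∑ j ∈ Finset.Icc 1 k, ((U 0 ω - U j ω) - B j)
        = (∑ k ∈ Finset.Icc 1 (n - 1), lam k / ((k : ℝ) + 1) *
            ∑ j ∈ Finset.Icc 1 k, (U 0 ω - U j ω))
          - ∑ k ∈ Finset.Icc 1 (n - 1), lam k / ((k : ℝ) + 1) * ∑ j ∈ Finset.Icc 1 k, B j := by
      rw [← Finset.sum_sub_distrib]
      refine Finset.sum_congr rfl fun k _ => ?_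
      rw [Finset.sum_sub_distrib, mul_sub]
    have hsplit2 : ∑ k ∈ Finset.Icc 1 (n - 1), lam k / ((k : ℝ) + 1) *
        ∑ j ∈ Finset.Icc 1 k, ((U 0 ω - U j ω) + B j)
        = (∑ k ∈ Finset.Icc 1 (n - 1), lam k / ((k : ℝ) + 1) *
            ∑ j ∈ Finset.Icc 1 k, (U 0 ω - U j ω))
          + ∑ k ∈ Finset.Icc 1 (n - 1), lam k / ((k : ℝ) + 1) * ∑ j ∈ Finset.Icc 1 k, B j := by
      rw [← Finset.sum_add_distrib]
      refine Finset.sum_congr rfl fun k _ => ?_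
      rw [Finset.sum_add_distrib, mul_add]
    rw [hsplit1, hsplit2]
    constructor <;> linarith
  calc ENNReal.ofReal (1 - α)
      ≤ P {ω | X ω ∈ Set.Icc (-(z * Real.sqrt (v:ℝ))) (z * Real.sqrt (v:ℝ))} :=
        prob_abs_le P X hXm v hXdist hα hz
    _ ≤ _ := measure_mono hsub
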